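/- Let g_k^{(k)}(s) = (1/2)‖A V_k s − r₀‖²_{R_{k+1}^{-1}} and ḡ_k^{(k)}(s) = (1/2)‖A V_k s − r₀‖²_{R̄^{(S)}_{k+1}}, with A V_k = U_{k+1}M_k (orthonormal U_{k+1}), r₀ = βu₁, and r_k = r₀ − A V_k s_k = U_{k+1}(βe₁ − M_k s_k). Then |ḡ_k^{(k)}(s_k) − g_k^{(k)}(s_k)| = (1/2)|Σ_{i=1}^{k+1} r_kᵀ(R_i^{-1}−R_{k+1}^{-1})u_i u_iᵀ r_k| ≤ (1/2)‖r_k‖ Σ_{i=1}^{k+1} ‖R_i^{-1}−R_{k+1}^{-1}‖ · |[M_k s_k − βe₁]_i|. -/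

import Mathlib

open Matrix

/-- Euclidean norm of a vector in `ℝ^d`. -/
noncomputable def enorm13 {d : ℕ} (v : Fin d → ℝ) : ℝ :=
  ‖(WithLp.equiv 2 (Fin d → ℝ)).symm v‖

/-- Euclidean operator norm of a matrix. -/
noncomputable def opnorm13 {a b : ℕ} (M : Matrix (Fin a) (Fin b) ℝ) : ℝ :=
  ‖LinearMap.toContinuousLinearMap (Matrix.toEuclideanLin M)‖

lemma dot_eq_inner13 {d : ℕ} (x y : Fin d → ℝ) :
    x ⬝ᵥ y = inner ℝ ((WithLp.equiv 2 (Fin d → ℝ)).symm x) ((WithLp.equiv 2 (Fin d → ℝ)).symm y) := by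
  simp [PiLp.inner_apply, dotProduct, RCLike.inner_apply, mul_comm]

lemma dot_mulVec_le13 {d e : ℕ} (x : Fin d → ℝ) (D : Matrix (Fin d) (Fin e) ℝ)
    (y : Fin e → ℝ) :
    |x ⬝ᵥ (D *ᵥ y)| ≤ enorm13 x * (opnorm13 D * enorm13 y) := by
  rw [dot_eq_inner13]
  set x' := (WithLp.equiv 2 (Fin d → ℝ)).symm x
  set y' := (WithLp.equiv 2 (Fin e → ℝ)).symm y
  have h2 : (WithLp.equiv 2 (Fin d → ℝ)).symm (D *ᵥ y)
      = (LinearMap.toContinuousLinearMap (Matrix.toEuclideanLin D)) y' := by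
    simp [y', Matrix.toEuclideanLin_apply_piLp_toLp]
  rw [h2]
  calc |inner ℝ x' ((LinearMap.toContinuousLinearMap (Matrix.toEuclideanLin D)) y')|
      ≤ ‖x'‖ * ‖(LinearMap.toContinuousLinearMap (Matrix.toEuclideanLin D)) y'‖ :=
        abs_real_inner_le_norm _ _
    _ ≤ ‖x'‖ * (opnorm13 D * ‖y'‖) := by
        apply mul_le_mul_of_nonneg_left (ContinuousLinearMap.le_opNorm _ _) (norm_nonneg _)

lemma dotProduct_sum13 {d : ℕ} {ι : Type*} (t : Finset ι) (x : Fin d → ℝ)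
    (f : ι → Fin d → ℝ) : x ⬝ᵥ (∑ l ∈ t, f l) = ∑ l ∈ t, x ⬝ᵥ f l := by
  simp only [dotProduct, Finset.sum_apply, Finset.mul_sum]
  exact Finset.sum_comm

lemma sum_mulVec13 {d e : ℕ} {ι : Type*} (t : Finset ι)
    (N : ι → Matrix (Fin d) (Fin e) ℝ) (w : Fin e → ℝ) :
    (∑ i ∈ t, N i) *ᵥ w = ∑ i ∈ t, N i *ᵥ w := by
  classical
  induction t using Finset.induction_on with
  | empty => simp
  | insert _ _ h ih => rw [Finset.sum_insert h, Finset.sum_insert h, add_mulVec, ih]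

lemma mulVec_sum13 {d e : ℕ} {ι : Type*} (t : Finset ι)
    (N : Matrix (Fin d) (Fin e) ℝ) (v : ι → Fin e → ℝ) :
    N *ᵥ (∑ l ∈ t, v l) = ∑ l ∈ t, N *ᵥ v l := by
  simp only [← Matrix.mulVecLin_apply]
  exact map_sum N.mulVecLin v t
/-- Inexactness estimate for the projected functionals: the gap between the exact
restricted functional `g_k^{(k)}(s_k)` and its inexact version `ḡ_k^{(k)}(s_k)`
equals `(1/2)|Σᵢ r_kᵀ(Rᵢ⁻¹−R_{k+1}⁻¹)uᵢuᵢᵀr_k|` and is bounded by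
`(1/2)‖r_k‖ Σᵢ ‖Rᵢ⁻¹−R_{k+1}⁻¹‖ |[M_k s_k − βe₁]ᵢ|`. -/
theorem stmt13 (m n k : ℕ)
    (u : Fin (k + 1) → Fin m → ℝ)
    (hu : ∀ i j, u i ⬝ᵥ u j = if i = j then (1 : ℝ) else 0)
    (R Rinv : Fin (k + 1) → Matrix (Fin m) (Fin m) ℝ)
    (hR : ∀ i, (R i).PosDef)
    (hRinv : ∀ i, R i * Rinv i = 1) (hRinv' : ∀ i, Rinv i * R i = 1)
    (A : Matrix (Fin m) (Fin n) ℝ)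
    (U : Matrix (Fin m) (Fin (k + 1)) ℝ) (hU : ∀ i j, U i j = u j i)
    (Vk : Matrix (Fin n) (Fin k) ℝ)
    (M : Matrix (Fin (k + 1)) (Fin k) ℝ) (hAV : A * Vk = U * M)
    (Rbar : Matrix (Fin m) (Fin m) ℝ)
    (hRbar : Rbar = ∑ i, Rinv i * vecMulVec (u i) (u i))
    (RbarS : Matrix (Fin m) (Fin m) ℝ)
    (hRbarS : RbarS = (1 / 2 : ℝ) • (Rbar + Rbarᵀ))
    (β : ℝ) (r0 : Fin m → ℝ) (hr0 : r0 = β • u 0)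
    (s : Fin k → ℝ)
    (r : Fin m → ℝ) (hr : r = r0 - A *ᵥ (Vk *ᵥ s)) :
    |(1 / 2 : ℝ) * ((A *ᵥ (Vk *ᵥ s) - r0) ⬝ᵥ (RbarS *ᵥ (A *ᵥ (Vk *ᵥ s) - r0)))
        - (1 / 2 : ℝ) * ((A *ᵥ (Vk *ᵥ s) - r0) ⬝ᵥ
            (Rinv (Fin.last k) *ᵥ (A *ᵥ (Vk *ᵥ s) - r0)))|
      = (1 / 2 : ℝ) *
          |∑ i, (r ⬝ᵥ ((Rinv i - Rinv (Fin.last k)) *ᵥ u i)) * (u i ⬝ᵥ r)| ∧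
    (1 / 2 : ℝ) *
          |∑ i, (r ⬝ᵥ ((Rinv i - Rinv (Fin.last k)) *ᵥ u i)) * (u i ⬝ᵥ r)|
      ≤ (1 / 2 : ℝ) * enorm13 r *
          ∑ i, opnorm13 (Rinv i - Rinv (Fin.last k)) *
            |(M *ᵥ s - β • (Pi.single (0 : Fin (k + 1)) 1 : Fin (k + 1) → ℝ)) i| := by
  set c : Fin (k + 1) → ℝ :=
    M *ᵥ s - β • (Pi.single (0 : Fin (k + 1)) 1 : Fin (k + 1) → ℝ) with hc
  set w : Fin m → ℝ := A *ᵥ (Vk *ᵥ s) - r0 with hwdef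
  -- w = U *ᵥ c
  have hr0U : r0 = U *ᵥ (β • (Pi.single (0 : Fin (k + 1)) 1 : Fin (k + 1) → ℝ)) := by
    ext j
    simp [hr0, mulVec, dotProduct, Pi.single_apply, hU, mul_comm]
  have hw : w = U *ᵥ c := by
    rw [hwdef, hc, mulVec_sub, ← hr0U, mulVec_mulVec, hAV, ← mulVec_mulVec]
  -- w as a linear combination of the u i
  have hsum : w = ∑ l, c l • u l := by
    rw [hw]; ext j
    simp [mulVec, dotProduct, hU, Finset.sum_apply, mul_comm]
  -- coordinates
  have hcoord : ∀ i, u i ⬝ᵥ w = c i := by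
    intro i
    rw [hsum, dotProduct_sum13]
    simp only [dotProduct_smul, hu, smul_eq_mul, mul_ite, mul_one, mul_zero]
    simp
  have hrw : r = -w := by rw [hr, hwdef]; ring_nf
  -- quadratic form of symmetric part
  have hsym : w ⬝ᵥ (RbarS *ᵥ w) = w ⬝ᵥ (Rbar *ᵥ w) := by
    have ht : w ⬝ᵥ (Rbarᵀ *ᵥ w) = w ⬝ᵥ (Rbar *ᵥ w) := by
      rw [dotProduct_mulVec, vecMul_transpose, dotProduct_comm]
    rw [hRbarS, smul_mulVec, dotProduct_smul, add_mulVec, dotProduct_add, ht,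
      smul_eq_mul]
    ring
  -- Rbar quadratic form
  have hbar : w ⬝ᵥ (Rbar *ᵥ w) = ∑ i, (w ⬝ᵥ (Rinv i *ᵥ u i)) * (u i ⬝ᵥ w) := by
    rw [hRbar, sum_mulVec13, dotProduct_sum13]
    refine Finset.sum_congr rfl fun i _ => ?_
    have h1 : vecMulVec (u i) (u i) *ᵥ w = (u i ⬝ᵥ w) • u i := by
      ext j
      simp only [vecMulVec, of_apply, mulVec, dotProduct, Pi.smul_apply, smul_eq_mul,
        Finset.mul_sum, Finset.sum_mul]
      exact Finset.sum_congr rfl fun x _ => by ring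
    rw [← mulVec_mulVec, h1, mulVec_smul, dotProduct_smul, smul_eq_mul, mul_comm]
  -- R_last quadratic form
  have hlast : w ⬝ᵥ (Rinv (Fin.last k) *ᵥ w)
      = ∑ i, (w ⬝ᵥ (Rinv (Fin.last k) *ᵥ u i)) * (u i ⬝ᵥ w) := by
    calc w ⬝ᵥ (Rinv (Fin.last k) *ᵥ w)
        = w ⬝ᵥ (Rinv (Fin.last k) *ᵥ (∑ l, c l • u l)) := by rw [← hsum]
      _ = ∑ i, c i * (w ⬝ᵥ (Rinv (Fin.last k) *ᵥ u i)) := by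
          rw [mulVec_sum13, dotProduct_sum13]
          refine Finset.sum_congr rfl fun i _ => ?_
          rw [mulVec_smul, dotProduct_smul, smul_eq_mul]
      _ = ∑ i, (w ⬝ᵥ (Rinv (Fin.last k) *ᵥ u i)) * (u i ⬝ᵥ w) := by
          refine Finset.sum_congr rfl fun i _ => ?_
          rw [hcoord i]; ring
  -- the key identity
  have hkey : (1 / 2 : ℝ) * (w ⬝ᵥ (RbarS *ᵥ w))
        - (1 / 2 : ℝ) * (w ⬝ᵥ (Rinv (Fin.last k) *ᵥ w))
      = (1 / 2 : ℝ) * ∑ i, (r ⬝ᵥ ((Rinv i - Rinv (Fin.last k)) *ᵥ u i)) * (u i ⬝ᵥ r) := by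
    rw [hsym, hbar, hlast, ← mul_sub, ← Finset.sum_sub_distrib]
    congr 1
    refine Finset.sum_congr rfl fun i _ => ?_
    rw [hrw]
    simp only [sub_mulVec, dotProduct_sub, neg_dotProduct, dotProduct_neg]
    ring
  have habs : |(1 / 2 : ℝ) * (w ⬝ᵥ (RbarS *ᵥ w))
        - (1 / 2 : ℝ) * (w ⬝ᵥ (Rinv (Fin.last k) *ᵥ w))|
      = (1 / 2 : ℝ) * |∑ i, (r ⬝ᵥ ((Rinv i - Rinv (Fin.last k)) *ᵥ u i)) * (u i ⬝ᵥ r)| := by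
    rw [hkey, abs_mul, abs_of_pos (by norm_num : (0:ℝ) < 1/2)]
  refine ⟨habs, ?_⟩
  -- the bound
  have hnormu : ∀ i, enorm13 (u i) = 1 := by
    intro i
    have h1 : enorm13 (u i) ^ 2 = 1 := by
      have := hu i i
      simp at this
      rw [enorm13, ← real_inner_self_eq_norm_sq, ← dot_eq_inner13, this]
    have h0 : (0:ℝ) ≤ enorm13 (u i) := norm_nonneg _
    nlinarith
  have hterm : ∀ i, |(r ⬝ᵥ ((Rinv i - Rinv (Fin.last k)) *ᵥ u i)) * (u i ⬝ᵥ r)|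
      ≤ enorm13 r * (opnorm13 (Rinv i - Rinv (Fin.last k)) * |c i|) := by
    intro i
    have h1 : |u i ⬝ᵥ r| = |c i| := by
      rw [hrw, dotProduct_neg, abs_neg, hcoord i]
    rw [abs_mul, h1]
    have h2 := dot_mulVec_le13 r (Rinv i - Rinv (Fin.last k)) (u i)
    rw [hnormu i, mul_one] at h2
    have h3 : (0:ℝ) ≤ |c i| := abs_nonneg _
    calc |r ⬝ᵥ ((Rinv i - Rinv (Fin.last k)) *ᵥ u i)| * |c i|
        ≤ enorm13 r * opnorm13 (Rinv i - Rinv (Fin.last k)) * |c i| := by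
          apply mul_le_mul_of_nonneg_right _ h3
          simpa [mul_assoc] using h2
      _ = enorm13 r * (opnorm13 (Rinv i - Rinv (Fin.last k)) * |c i|) := by ring
  calc (1 / 2 : ℝ) * |∑ i, (r ⬝ᵥ ((Rinv i - Rinv (Fin.last k)) *ᵥ u i)) * (u i ⬝ᵥ r)|
      ≤ (1 / 2 : ℝ) * ∑ i, |(r ⬝ᵥ ((Rinv i - Rinv (Fin.last k)) *ᵥ u i)) * (u i ⬝ᵥ r)| := by
        apply mul_le_mul_of_nonneg_left (Finset.abs_sum_le_sum_abs _ _) (by norm_num)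
    _ ≤ (1 / 2 : ℝ) * ∑ i, enorm13 r * (opnorm13 (Rinv i - Rinv (Fin.last k)) * |c i|) := by
        apply mul_le_mul_of_nonneg_left (Finset.sum_le_sum fun i _ => hterm i) (by norm_num)
    _ = (1 / 2 : ℝ) * enorm13 r *
          ∑ i, opnorm13 (Rinv i - Rinv (Fin.last k)) * |c i| := by
        rw [← Finset.mul_sum]; ring
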